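/- arXiv:2206.07149 — 2 statements merged into one kernel-verified Lean document; each statement's English description precedes it below -/
import Mathlib

section
/- For every d ≥ 1/2 there is a constant C_d > 0 such that for all λ ≥ 0, w > 0 with λw ≤ 1, one has (λ + w + 1) · w^{d−1/2} · e^{-(λ+w)} ≤ C_d · e^{-(√λ − √w)²/2}. -/
open Real

theorem Real.rpow_mul_exp_neg_mul_le {a b x : ℝ} (ha : 0 ≤ a) (hb : 0 < b) (hx : 0 ≤ x) :
    x ^ a * exp (-(b * x)) ≤ (a / b) ^ a * exp (-a) := by
  rcases ha.eq_or_lt with rfl | ha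
  · simpa using exp_le_one_iff.2 (by nlinarith : -(b * x) ≤ 0)
  rcases hx.eq_or_lt with rfl | hx
  · rw [zero_rpow ha.ne', zero_mul]
    positivity
  rw [rpow_def_of_pos hx, rpow_def_of_pos (by positivity), ← exp_add, ← exp_add, exp_le_exp]
  have key := log_le_sub_one_of_pos (show 0 < b * x / a by positivity)
  rw [log_div (by positivity) ha.ne', log_mul hb.ne' hx.ne'] at key
  rw [log_div ha.ne' hb.ne']
  have := mul_le_mul_of_nonneg_left key ha.le
  field_simp at this
  nlinarith

theorem Real.sqrt_sub_sqrt_sq_le_add {x y : ℝ} (hx : 0 ≤ x) (hy : 0 ≤ y) :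
    (√x - √y) ^ 2 ≤ x + y := by
  nlinarith [sq_sqrt hx, sq_sqrt hy, sqrt_nonneg x, sqrt_nonneg y]

/-- For `d ≥ 1/2`: `(λ+w+1) w^(d-1/2) e^{-(λ+w)} ≤ C e^{-(√λ-√w)²/2}` on `λw ≤ 1`. -/
theorem stmt13 (d : ℝ) (hd : (1 : ℝ) / 2 ≤ d) :
    ∃ C : ℝ, 0 < C ∧ ∀ lam w : ℝ, 0 ≤ lam → 0 < w → lam * w ≤ 1 →
      (lam + w + 1) * w ^ (d - 1 / 2) * Real.exp (-(lam + w)) ≤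
        C * Real.exp (-(Real.sqrt lam - Real.sqrt w) ^ 2 / 2) := by
  set a := d - 1 / 2
  have ha : 0 ≤ a := sub_nonneg.2 hd
  set K := ((a + 1) / (1 / 2)) ^ (a + 1) * exp (-(a + 1))
  refine ⟨K * exp (1 / 2), by positivity, fun lam w hlam hw _ => ?_⟩
  set s := lam + w
  have hs : 0 ≤ s + 1 := by positivity
  have hpow : (s + 1) * w ^ a ≤ (s + 1) ^ (a + 1) := by
    rw [rpow_add_one' hs (by positivity), mul_comm]
    gcongr
    linarith
  -- half of the decay of `e^{-s}` absorbs the polynomial factor, the other half survives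
  have hsplit : exp (-s) = exp (-(1 / 2 * (s + 1))) * exp (1 / 2) * exp (-s / 2) := by
    rw [← exp_add, ← exp_add]
    ring_nf
  have hgauss : exp (-s / 2) ≤ exp (-(√lam - √w) ^ 2 / 2) := by
    have := sqrt_sub_sqrt_sq_le_add hlam hw.le
    gcongr
  calc (s + 1) * w ^ a * exp (-s)
      ≤ (s + 1) ^ (a + 1) * exp (-(1 / 2 * (s + 1))) * exp (1 / 2) * exp (-s / 2) := by
        rw [hsplit, ← mul_assoc, ← mul_assoc]
        gcongr
    _ ≤ K * exp (1 / 2) * exp (-(√lam - √w) ^ 2 / 2) := by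
        gcongr
        exact rpow_mul_exp_neg_mul_le (by linarith) one_half_pos hs
end

section
/- Suppose X₀ ⊇ X₁ ⊇ X₂ ⊇ ⋯ is a decreasing chain of Banach spaces with norms ‖·‖_k satisfying ‖x‖_{k−1} ≤ ‖x‖_k for x ∈ X_k. Fix K ∈ ℕ and a linear map A with A X_k ⊆ X_k for every k, and suppose there are constants α_j ∈ [0,1) for 0 ≤ j ≤ K and β_j ≥ 0 for 1 ≤ j ≤ K such that ‖Ax‖_0 ≤ α_0‖x‖_0 for x ∈ X_0 and ‖Ax‖_k ≤ α_k‖x‖_k + β_k‖x‖_{k−1} for x ∈ X_k, 1 ≤ k ≤ K. Then the Neumann series Σ_{j=0}^∞ A^j converges in the operator-norm topology of each (X_k, ‖·‖_k), 0 ≤ k ≤ K, and the sum is a bounded inverse of (Id − A) on X_k. -/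
open Filter

lemma aux_summable18 {a b : ℕ → ℝ} {α : ℝ} (hα0 : 0 ≤ α) (hα1 : α < 1)
    (ha : ∀ n, 0 ≤ a n) (hb : ∀ n, 0 ≤ b n)
    (hrec : ∀ n, a (n + 1) ≤ α * a n + b n) (hbs : Summable b) : Summable a := by
  set B := ∑' n, b n with hBdef
  have hB0 : 0 ≤ B := tsum_nonneg hb
  have hBle : ∀ N, ∑ n ∈ Finset.range N, b n ≤ B := fun N =>
    Summable.sum_le_tsum _ (fun i _ => hb i) hbs
  have key : ∀ N, (1 - α) * (∑ n ∈ Finset.range N, a n) ≤ a 0 + B := by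
    intro N
    cases N with
    | zero =>
      simp only [Finset.range_zero, Finset.sum_empty, mul_zero]
      linarith [ha 0]
    | succ M =>
      have h1 : ∑ n ∈ Finset.range (M + 1), a n
          = (∑ n ∈ Finset.range M, a (n + 1)) + a 0 := Finset.sum_range_succ' a M
      have h2 : ∑ n ∈ Finset.range M, a (n + 1)
          ≤ α * (∑ n ∈ Finset.range M, a n) + ∑ n ∈ Finset.range M, b n := by
        rw [Finset.mul_sum, ← Finset.sum_add_distrib]
        exact Finset.sum_le_sum fun i _ => hrec i
      have h3 : ∑ n ∈ Finset.range M, a n ≤ ∑ n ∈ Finset.range (M + 1), a n := by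
        rw [Finset.sum_range_succ]; linarith [ha M]
      have h4 := hBle M
      nlinarith
  apply summable_of_sum_range_le (c := (a 0 + B) / (1 - α)) ha
  intro N
  rw [le_div_iff₀ (by linarith)]
  linarith [key N]

/-- Banach-ladder Neumann series lemma (Epstein–Mazzeo, Theorem 11.8.1).
The ladder `X₀ ⊇ X₁ ⊇ ⋯` is modeled by Banach spaces `E k` with norm-nonincreasing
inclusions `J k : E (k+1) →L E k`, and `A` acts compatibly on every level. -/
theorem stmt18 (E : ℕ → Type*) [∀ k, NormedAddCommGroup (E k)]
    [∀ k, NormedSpace ℝ (E k)] [∀ k, CompleteSpace (E k)]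
    (J : ∀ k, E (k + 1) →L[ℝ] E k)
    (hJ : ∀ k (x : E (k + 1)), ‖J k x‖ ≤ ‖x‖)
    (A : ∀ k, E k →L[ℝ] E k)
    (hcompat : ∀ k, (A k).comp (J k) = (J k).comp (A (k + 1)))
    (K : ℕ) (α β : ℕ → ℝ)
    (hα : ∀ j, j ≤ K → 0 ≤ α j ∧ α j < 1) (hβ : ∀ j, 0 ≤ β j)
    (h0 : ∀ x : E 0, ‖A 0 x‖ ≤ α 0 * ‖x‖)
    (hk : ∀ k, k + 1 ≤ K → ∀ x : E (k + 1),
      ‖A (k + 1) x‖ ≤ α (k + 1) * ‖x‖ + β (k + 1) * ‖J k x‖) :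
    ∀ k, k ≤ K → ∃ B : E k →L[ℝ] E k,
      Tendsto (fun n => ∑ j ∈ Finset.range n, (A k) ^ j) atTop (nhds B) ∧
      B.comp (ContinuousLinearMap.id ℝ (E k) - A k) = ContinuousLinearMap.id ℝ (E k) ∧
      (ContinuousLinearMap.id ℝ (E k) - A k).comp B = ContinuousLinearMap.id ℝ (E k) := by
  -- intertwining of powers
  have hcompat' : ∀ k (x : E (k + 1)), A k (J k x) = J k (A (k + 1) x) := by
    intro k x
    exact DFunLike.congr_fun (hcompat k) x
  have hJn : ∀ k n (x : E (k + 1)), J k (((A (k + 1)) ^ n) x) = ((A k) ^ n) (J k x) := by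
    intro k n
    induction n with
    | zero => intro x; simp
    | succ n ih =>
      intro x
      have e1 : ((A (k + 1)) ^ (n + 1)) x = ((A (k + 1)) ^ n) (A (k + 1) x) := by
        rw [pow_succ]; rfl
      rw [e1, ih (A (k + 1) x), ← hcompat' k x]
      have e2 : ((A k) ^ (n + 1)) (J k x) = ((A k) ^ n) (A k (J k x)) := by
        rw [pow_succ]; rfl
      rw [e2]
  -- main summability induction
  have main : ∀ k, k ≤ K → Summable (fun n => ‖(A k) ^ n‖) := by
    intro k
    induction k with
    | zero =>
      intro hkK
      have hα0 := hα 0 hkK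
      refine aux_summable18 (b := fun _ => 0) hα0.1 hα0.2
        (fun n => norm_nonneg _) (fun n => le_refl 0) ?_ summable_zero
      intro n
      rw [add_zero]
      apply ContinuousLinearMap.opNorm_le_bound
      · exact mul_nonneg hα0.1 (norm_nonneg _)
      · intro x
        have e1 : ((A 0) ^ (n + 1)) x = A 0 (((A 0) ^ n) x) := by
          rw [pow_succ']; rfl
        rw [e1]
        calc ‖A 0 (((A 0) ^ n) x)‖ ≤ α 0 * ‖((A 0) ^ n) x‖ := h0 _
          _ ≤ α 0 * (‖(A 0) ^ n‖ * ‖x‖) := by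
              apply mul_le_mul_of_nonneg_left (ContinuousLinearMap.le_opNorm _ _) hα0.1
          _ = α 0 * ‖(A 0) ^ n‖ * ‖x‖ := by ring
    | succ k ih =>
      intro hkK
      have ihs := ih (le_trans (Nat.le_succ k) hkK)
      have hαk := hα (k + 1) hkK
      refine aux_summable18 (b := fun n => β (k + 1) * ‖(A k) ^ n‖) hαk.1 hαk.2
        (fun n => norm_nonneg _) (fun n => mul_nonneg (hβ _) (norm_nonneg _)) ?_ (ihs.mul_left _)
      intro n
      apply ContinuousLinearMap.opNorm_le_bound
      · exact add_nonneg (mul_nonneg hαk.1 (norm_nonneg _)) (mul_nonneg (hβ _) (norm_nonneg _))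
      · intro x
        have e1 : ((A (k + 1)) ^ (n + 1)) x = A (k + 1) (((A (k + 1)) ^ n) x) := by
          rw [pow_succ']; rfl
        rw [e1]
        calc ‖A (k + 1) (((A (k + 1)) ^ n) x)‖
            ≤ α (k + 1) * ‖((A (k + 1)) ^ n) x‖ + β (k + 1) * ‖J k (((A (k + 1)) ^ n) x)‖ :=
              hk k hkK _
          _ ≤ α (k + 1) * (‖(A (k + 1)) ^ n‖ * ‖x‖)
              + β (k + 1) * (‖(A k) ^ n‖ * ‖x‖) := by
              apply add_le_add
              · exact mul_le_mul_of_nonneg_left (ContinuousLinearMap.le_opNorm _ _) hαk.1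
              · apply mul_le_mul_of_nonneg_left _ (hβ (k + 1))
                rw [hJn k n x]
                calc ‖((A k) ^ n) (J k x)‖ ≤ ‖(A k) ^ n‖ * ‖J k x‖ :=
                      ContinuousLinearMap.le_opNorm _ _
                  _ ≤ ‖(A k) ^ n‖ * ‖x‖ :=
                      mul_le_mul_of_nonneg_left (hJ k x) (norm_nonneg _)
          _ = (α (k + 1) * ‖(A (k + 1)) ^ n‖ + β (k + 1) * ‖(A k) ^ n‖) * ‖x‖ := by ring
  -- conclude
  intro k hkK
  have hs : Summable (fun n => (A k) ^ n) := (main k hkK).of_norm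
  refine ⟨∑' n, (A k) ^ n, hs.hasSum.tendsto_sum_nat, ?_, ?_⟩
  · have hA0 : Tendsto (fun n => (A k) ^ n) atTop (nhds 0) := hs.tendsto_atTop_zero
    have h1 : Tendsto (fun n => (∑ j ∈ Finset.range n, (A k) ^ j) * (1 - A k)) atTop
        (nhds ((∑' n, (A k) ^ n) * (1 - A k))) := hs.hasSum.tendsto_sum_nat.mul_const _
    have h2 : Tendsto (fun n => (∑ j ∈ Finset.range n, (A k) ^ j) * (1 - A k)) atTop
        (nhds 1) := by
      have e : ∀ n, (∑ j ∈ Finset.range n, (A k) ^ j) * (1 - A k) = 1 - (A k) ^ n := by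
        intro n
        have := geom_sum_mul (A k) n
        have e2 : (1 : E k →L[ℝ] E k) - A k = -(A k - 1) := by abel
        rw [e2, mul_neg, this]; abel
      simp only [e]
      simpa using (tendsto_const_nhds (x := (1 : E k →L[ℝ] E k))).sub hA0
    have := tendsto_nhds_unique h1 h2
    exact this
  · have hA0 : Tendsto (fun n => (A k) ^ n) atTop (nhds 0) := hs.tendsto_atTop_zero
    have h1 : Tendsto (fun n => (1 - A k) * (∑ j ∈ Finset.range n, (A k) ^ j)) atTop
        (nhds ((1 - A k) * ∑' n, (A k) ^ n)) := hs.hasSum.tendsto_sum_nat.const_mul _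
    have h2 : Tendsto (fun n => (1 - A k) * (∑ j ∈ Finset.range n, (A k) ^ j)) atTop
        (nhds 1) := by
      have e : ∀ n, (1 - A k) * (∑ j ∈ Finset.range n, (A k) ^ j) = 1 - (A k) ^ n := by
        intro n
        have := mul_geom_sum (A k) n
        have e2 : (1 : E k →L[ℝ] E k) - A k = -(A k - 1) := by abel
        rw [e2, neg_mul, this]; abel
      simp only [e]
      simpa using (tendsto_const_nhds (x := (1 : E k →L[ℝ] E k))).sub hA0
    have := tendsto_nhds_unique h1 h2
    exact this
end
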